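/- Let M1 and M2 be real symmetric 2×2 matrices with det(M1) > 0 and det(M2) > 0, and suppose M1 is not a scalar multiple of M2. Then there exists a real number μ such that det(M1 - μ·M2) < 0. -/

import Mathlib

/-!
`μ ↦ det (M1 - μ • M2)` is a quadratic polynomial in `μ`. If it were nonnegative everywhere its
discriminant would be `≤ 0`. But `p² · discriminant` is a sum of two squares, the second weighted
by `det M2 > 0`, and both squares vanish only when `M1 = (a / p) • M2`.
-/

theorem Matrix.det_fin_two_of_sub_smul {R : Type*} [CommRing R] (a b c d p q r s t : R) :
    (!![a, b; c, d] - t • !![p, q; r, s]).det =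
      (p * s - q * r) * (t * t) + -(a * s + d * p - b * r - c * q) * t + (a * d - b * c) := by
  rw [Matrix.det_fin_two]
  simp only [Matrix.sub_apply, Matrix.smul_apply, Matrix.of_apply, Matrix.cons_val',
    Matrix.cons_val_zero, Matrix.cons_val_one, Matrix.cons_val_fin_one, smul_eq_mul]
  ring

theorem sq_mul_discrim_det_sub_smul {R : Type*} [CommRing R] (a b c p q r : R) :
    p ^ 2 * discrim (p * r - q * q) (-(a * r + c * p - b * q - b * q)) (a * c - b * b) =
      (p * (p * c - a * r) - 2 * q * (p * b - a * q)) ^ 2 +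
        4 * (p * r - q * q) * (p * b - a * q) ^ 2 := by
  rw [discrim]
  ring

theorem eq_smul_of_discrim_det_sub_smul_nonpos {K : Type*} [Field K] [LinearOrder K]
    [IsStrictOrderedRing K] {a b c p q r : K} (hdet : 0 < p * r - q * q)
    (hdisc : discrim (p * r - q * q) (-(a * r + c * p - b * q - b * q)) (a * c - b * b) ≤ 0) :
    !![a, b; b, c] = (a / p) • !![p, q; q, r] := by
  have hp : p ≠ 0 := by
    rintro rfl
    nlinarith [sq_nonneg q]
  have hsum : (p * (p * c - a * r) - 2 * q * (p * b - a * q)) ^ 2 +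
      4 * (p * r - q * q) * (p * b - a * q) ^ 2 ≤ 0 := by
    rw [← sq_mul_discrim_det_sub_smul]
    exact mul_nonpos_of_nonneg_of_nonpos (sq_nonneg p) hdisc
  have hb : p * b - a * q = 0 := by
    refine pow_eq_zero_iff two_ne_zero |>.1 (le_antisymm ?_ (sq_nonneg _))
    nlinarith [sq_nonneg (p * (p * c - a * r) - 2 * q * (p * b - a * q))]
  have hc : p * c - a * r = 0 := by
    rw [hb, mul_zero, sub_zero] at hsum
    simpa [hp] using hsum
  have hb' : b = a / p * q := by field_simp; linear_combination hb
  have hc' : c = a / p * r := by field_simp; linear_combination hc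
  ext i j
  fin_cases i <;> fin_cases j <;> simp [hb', hc', hp]

theorem stmt_0_general (a b c p q r : ℝ)
    (M1 M2 : Matrix (Fin 2) (Fin 2) ℝ)
    (hM1 : M1 = !![a, b; b, c]) (hM2 : M2 = !![p, q; q, r])
    (hdet2 : 0 < M2.det)
    (hind : ∀ t : ℝ, M1 ≠ t • M2) :
    ∃ μ : ℝ, (M1 - μ • M2).det < 0 := by
  subst hM1 hM2
  rw [Matrix.det_fin_two_of] at hdet2
  by_contra! hnonneg
  simp only [Matrix.det_fin_two_of_sub_smul] at hnonneg
  exact hind (a / p) (eq_smul_of_discrim_det_sub_smul_nonpos hdet2 (discrim_le_zero hnonneg))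

/-- If `M1 = [[a,b],[b,c]]` and `M2 = [[p,q],[q,r]]` are real symmetric
2×2 matrices with positive determinants which are not proportional, then there is a
real `μ` with `det (M1 - μ • M2) < 0`. -/
theorem stmt_0 (a b c p q r : ℝ)
    (M1 M2 : Matrix (Fin 2) (Fin 2) ℝ)
    (hM1 : M1 = !![a, b; b, c]) (hM2 : M2 = !![p, q; q, r])
    (hdet1 : 0 < M1.det) (hdet2 : 0 < M2.det)
    (hind : ∀ t : ℝ, M1 ≠ t • M2) :
    ∃ μ : ℝ, (M1 - μ • M2).det < 0 :=
  stmt_0_general a b c p q r M1 M2 hM1 hM2 hdet2 hind
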